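/- arXiv:0707.4275 — 2 statements merged into one kernel-verified Lean document; each statement's English description precedes it below -/
import Mathlib

section
/- Let f : [a, b] → ℝ be differentiable with f' monotone and |f'(t)| ≥ M > 0 on [a, b]. Then |∫_a^b e^{i f(t)} dt| ≤ C/M for some absolute constant C (one may take C = 4). -/
/-!
On every subinterval `[c, d]` the function `f' e^{if}` is the derivative of `-i e^{if}`, so its
integral has modulus at most `2`. When `f' ≥ M`, write `e^{if} = (1/f') · f' e^{if}`: the weight
`1/f'` is monotone with values in `(0, 1/M]`, so each of its superlevel sets is an interval, and
slicing the weight into these sets (a layer-cake decomposition, i.e. the second mean value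
theorem) bounds the integral by `2/M`. By Darboux's theorem `f'` cannot jump over `(-M, M)`,
and the case `f' ≤ -M` follows by complex conjugation.
-/

open MeasureTheory Set

theorem Set.OrdConnected.ae_eq_Ioo_csInf_csSup {S : Set ℝ} (hS : S.OrdConnected)
    (hne : S.Nonempty) (hb : BddBelow S) (ha : BddAbove S) :
    S =ᵐ[volume] Ioo (sInf S) (sSup S) :=
  ((subset_Icc_csInf_csSup hb ha).eventuallyLE.trans Ioo_ae_eq_Icc.symm.le).antisymm
    (IsConnected.Ioo_csInf_csSup_subset ⟨hne, hS.isPreconnected⟩ hb ha).eventuallyLE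

section SecondMeanValue

variable {E : Type*} [NormedAddCommGroup E] [NormedSpace ℝ E]

theorem norm_setIntegral_le_of_ordConnected {g : ℝ → E} {a b B : ℝ} {S : Set ℝ} (hab : a ≤ b)
    (hB : ∀ c d, a ≤ c → c ≤ d → d ≤ b → ‖∫ t in c..d, g t‖ ≤ B)
    (hS : S.OrdConnected) (hSab : S ⊆ Icc a b) : ‖∫ t in S, g t‖ ≤ B := by
  rcases S.eq_empty_or_nonempty with rfl | hne
  · simpa using hB a a le_rfl le_rfl hab
  have hb : BddBelow S := bddBelow_Icc.mono hSab
  have ha : BddAbove S := bddAbove_Icc.mono hSab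
  have hcd : sInf S ≤ sSup S := csInf_le_csSup hne hb ha
  rw [setIntegral_congr_set (hS.ae_eq_Ioo_csInf_csSup hne hb ha), ← integral_Ioc_eq_integral_Ioo,
    ← intervalIntegral.integral_of_le hcd]
  exact hB _ _ (le_csInf hne fun t ht => (hSab ht).1) hcd (csSup_le hne fun t ht => (hSab ht).2)

theorem norm_integral_smul_le_of_quasiconcaveOn [CompleteSpace E] {g : ℝ → E} {φ : ℝ → ℝ}
    {a b K B : ℝ} (hab : a < b) (hφ : QuasiconcaveOn ℝ (Icc a b) φ)
    (hφm : AEMeasurable φ (volume.restrict (Ioc a b)))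
    (hφ0 : ∀ t ∈ Ioc a b, 0 ≤ φ t) (hφK : ∀ t ∈ Ioc a b, φ t ≤ K)
    (hg : IntegrableOn g (Ioc a b))
    (hB : ∀ c d, a ≤ c → c ≤ d → d ≤ b → ‖∫ t in c..d, g t‖ ≤ B) :
    ‖∫ t in a..b, φ t • g t‖ ≤ K * B := by
  -- `φ t` is the length of `{l ∈ (0, K] | l ≤ φ t}`; after Fubini, each slice in `l` integrates
  -- `g` over the superlevel set `{φ ≥ l}`, an interval.
  set F : ℝ × ℝ → E := {p | p.2 ≤ φ p.1}.indicator fun p => g p.1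
  have hlayer : ∀ t ∈ Ioc a b, φ t • g t = ∫ l in Ioc 0 K, F (t, l) := by
    intro t ht
    change _ = ∫ l in Ioc 0 K, (Iic (φ t)).indicator (fun _ => g t) l
    rw [integral_indicator measurableSet_Iic, Measure.restrict_restrict measurableSet_Iic,
      setIntegral_const, inter_comm, Ioc_inter_Iic, min_eq_right (hφK t ht),
      Real.volume_real_Ioc_of_le (hφ0 t ht), sub_zero]
  have hF : Integrable F ((volume.restrict (Ioc a b)).prod (volume.restrict (Ioc 0 K))) := by
    refine (hg.norm.comp_fst _).mono' ?_ (Filter.Eventually.of_forall fun p => ?_)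
    · exact hg.aestronglyMeasurable.comp_fst.indicator₀
        (nullMeasurableSet_le measurable_snd.aemeasurable
          hφm.aestronglyMeasurable.comp_fst.aemeasurable)
    · exact norm_indicator_le_norm_self _ p
  have hslice : ∀ l, ‖∫ t in Ioc a b, F (t, l)‖ ≤ B := by
    intro l
    set S := {t ∈ Icc a b | l ≤ φ t}
    have hSc : S.OrdConnected := (hφ l).ordConnected
    rw [setIntegral_congr_fun measurableSet_Ioc (g := S.indicator g) fun t ht => by
        simp only [F, S, indicator, mem_ofPred_eq, Ioc_subset_Icc_self ht, true_and],
      integral_indicator hSc.measurableSet, Measure.restrict_restrict hSc.measurableSet]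
    exact norm_setIntegral_le_of_ordConnected hab.le hB (hSc.inter ordConnected_Ioc)
      (inter_subset_left.trans (sep_subset _ _))
  have hK : 0 ≤ K := (hφ0 b (right_mem_Ioc.2 hab)).trans (hφK b (right_mem_Ioc.2 hab))
  calc ‖∫ t in a..b, φ t • g t‖ = ‖∫ l in Ioc 0 K, ∫ t in Ioc a b, F (t, l)‖ := by
        rw [intervalIntegral.integral_of_le hab.le, setIntegral_congr_fun measurableSet_Ioc hlayer,
          integral_integral_swap (f := fun t l => F (t, l)) hF]
    _ ≤ B * volume.real (Ioc 0 K) :=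
        norm_setIntegral_le_of_norm_le_const measure_Ioc_lt_top fun l _ => hslice l
    _ = K * B := by rw [Real.volume_real_Ioc_of_le hK, sub_zero, mul_comm]

end SecondMeanValue

theorem intervalIntegrable_deriv_mul_exp_I_mul {f f' : ℝ → ℝ} {c d : ℝ}
    (hf : ∀ t ∈ uIcc c d, HasDerivAt f (f' t) t) (hf' : IntervalIntegrable f' volume c d) :
    IntervalIntegrable (fun t => (f' t : ℂ) * Complex.exp (Complex.I * f t)) volume c d :=
  IntervalIntegrable.mul_continuousOn ⟨hf'.1.ofReal, hf'.2.ofReal⟩ fun t ht =>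
    ((hf t ht).ofReal_comp.const_mul _).cexp.continuousAt.continuousWithinAt

theorem norm_integral_deriv_mul_exp_I_mul_le_two {f f' : ℝ → ℝ} {c d : ℝ}
    (hf : ∀ t ∈ uIcc c d, HasDerivAt f (f' t) t) (hf' : IntervalIntegrable f' volume c d) :
    ‖∫ t in c..d, (f' t : ℂ) * Complex.exp (Complex.I * f t)‖ ≤ 2 := by
  have hderiv : ∀ t ∈ uIcc c d, HasDerivAt (fun s => -Complex.I * Complex.exp (Complex.I * f s))
      ((f' t : ℂ) * Complex.exp (Complex.I * f t)) t := by
    intro t ht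
    refine (((hf t ht).ofReal_comp.const_mul Complex.I).cexp.const_mul (-Complex.I)).congr_deriv ?_
    linear_combination (-(Complex.exp (Complex.I * f t) * f' t)) * Complex.I_sq
  rw [intervalIntegral.integral_eq_sub_of_hasDerivAt hderiv
    (intervalIntegrable_deriv_mul_exp_I_mul hf hf')]
  calc _ ≤ ‖-Complex.I * Complex.exp (Complex.I * f d)‖
        + ‖-Complex.I * Complex.exp (Complex.I * f c)‖ := norm_sub_le _ _
    _ = 2 := by
      simp only [norm_mul, norm_neg, Complex.norm_I, Complex.norm_exp_I_mul_ofReal]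
      norm_num

theorem intervalIntegrable_of_monotoneOn_or_antitoneOn {u : ℝ → ℝ} {a b c d : ℝ}
    (hu : MonotoneOn u (Icc a b) ∨ AntitoneOn u (Icc a b)) (hc : c ∈ Icc a b) (hd : d ∈ Icc a b) :
    IntervalIntegrable u volume c d := by
  rcases hu with h | h
  exacts [(h.mono (uIcc_subset_Icc hc hd)).intervalIntegrable,
    (h.mono (uIcc_subset_Icc hc hd)).intervalIntegrable]

theorem norm_integral_exp_I_mul_le_of_le_deriv {a b M : ℝ} {f f' : ℝ → ℝ} (hab : a < b)
    (hf : ∀ t ∈ Icc a b, HasDerivAt f (f' t) t)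
    (hmono : MonotoneOn f' (Icc a b) ∨ AntitoneOn f' (Icc a b)) (hM : 0 < M)
    (hpos : ∀ t ∈ Icc a b, M ≤ f' t) :
    ‖∫ t in a..b, Complex.exp (Complex.I * f t)‖ ≤ 2 / M := by
  have hf'pos : ∀ t ∈ Icc a b, 0 < f' t := fun t ht => hM.trans_le (hpos t ht)
  have hφ : QuasiconcaveOn ℝ (Icc a b) fun t => (f' t)⁻¹ := by
    rcases hmono with h | h
    · exact AntitoneOn.quasiconcaveOn (fun s hs t ht hst => inv_anti₀ (hf'pos s hs) (h hs ht hst))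
        (convex_Icc a b)
    · exact MonotoneOn.quasiconcaveOn (fun s hs t ht hst => inv_anti₀ (hf'pos t ht) (h hs ht hst))
        (convex_Icc a b)
  have hf'm : AEMeasurable f' (volume.restrict (Ioc a b)) := by
    refine AEMeasurable.mono_measure ?_ (Measure.restrict_mono Ioc_subset_Icc_self le_rfl)
    rcases hmono with h | h
    exacts [aemeasurable_restrict_of_monotoneOn measurableSet_Icc h,
      aemeasurable_restrict_of_antitoneOn measurableSet_Icc h]
  have hB : ∀ c d, a ≤ c → c ≤ d → d ≤ b →
      ‖∫ t in c..d, (f' t : ℂ) * Complex.exp (Complex.I * f t)‖ ≤ 2 := fun c d hac hcd hdb =>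
    norm_integral_deriv_mul_exp_I_mul_le_two
      (fun t ht => hf t (uIcc_subset_Icc ⟨hac, hcd.trans hdb⟩ ⟨hac.trans hcd, hdb⟩ ht))
      (intervalIntegrable_of_monotoneOn_or_antitoneOn hmono ⟨hac, hcd.trans hdb⟩
        ⟨hac.trans hcd, hdb⟩)
  have hweight := norm_integral_smul_le_of_quasiconcaveOn hab hφ hf'm.inv
    (fun t ht => (inv_pos.2 (hf'pos t (Ioc_subset_Icc_self ht))).le)
    (fun t ht => inv_anti₀ hM (hpos t (Ioc_subset_Icc_self ht)))
    (intervalIntegrable_deriv_mul_exp_I_mul (fun t ht => hf t (uIcc_of_le hab.le ▸ ht))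
      (intervalIntegrable_of_monotoneOn_or_antitoneOn hmono (left_mem_Icc.2 hab.le)
        (right_mem_Icc.2 hab.le))).1 hB
  calc ‖∫ t in a..b, Complex.exp (Complex.I * f t)‖
      = ‖∫ t in a..b, (f' t)⁻¹ • ((f' t : ℂ) * Complex.exp (Complex.I * f t))‖ := by
        refine congrArg _ (intervalIntegral.integral_congr fun t ht => ?_)
        rw [uIcc_of_le hab.le] at ht
        rw [Complex.real_smul, Complex.ofReal_inv,
          inv_mul_cancel_left₀ (Complex.ofReal_ne_zero.2 (hf'pos t ht).ne')]
    _ ≤ M⁻¹ * 2 := hweight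
    _ = 2 / M := by ring

theorem le_deriv_or_deriv_le_neg {a b M : ℝ} {f f' : ℝ → ℝ}
    (hf : ∀ t ∈ Icc a b, HasDerivAt f (f' t) t) (hM : 0 < M)
    (hlow : ∀ t ∈ Icc a b, M ≤ |f' t|) :
    (∀ t ∈ Icc a b, M ≤ f' t) ∨ ∀ t ∈ Icc a b, f' t ≤ -M := by
  by_contra! ⟨⟨s, hs, hs'⟩, u, hu, hu'⟩
  have hsneg : f' s ≤ -M := (le_abs'.1 (hlow s hs)).resolve_right hs'.not_ge
  have hupos : M ≤ f' u := (le_abs'.1 (hlow u hu)).resolve_left hu'.not_ge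
  obtain ⟨t, ht, hzero⟩ : (0 : ℝ) ∈ f' '' Icc a b :=
    (ordConnected_Icc.image_hasDerivWithinAt fun t ht => (hf t ht).hasDerivWithinAt).out
      (mem_image_of_mem f' hs) (mem_image_of_mem f' hu) ⟨by linarith, by linarith⟩
  have := hlow t ht
  rw [hzero, abs_zero] at this
  linarith

theorem norm_integral_exp_I_mul_neg (a b : ℝ) (f : ℝ → ℝ) :
    ‖∫ t in a..b, Complex.exp (Complex.I * ↑(-f t))‖
      = ‖∫ t in a..b, Complex.exp (Complex.I * f t)‖ := by
  have hconj : ∀ t, Complex.exp (Complex.I * ↑(-f t))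
      = (starRingEnd ℂ) (Complex.exp (Complex.I * f t)) := fun t => by
    rw [← Complex.exp_conj, map_mul, Complex.conj_I, Complex.conj_ofReal, Complex.ofReal_neg,
      neg_mul, mul_neg]
  simp_rw [hconj, intervalIntegral.intervalIntegral_conj, Complex.norm_conj]

/-- First derivative test for exponential integrals: if `f' ` is monotone and
`|f'| ≥ M > 0` on `[a, b]`, then `|∫_a^b e^{i f(t)} dt| ≤ C/M` with `C = 4`. -/
theorem first_derivative_test (a b : ℝ) (hab : a < b) (f f' : ℝ → ℝ)
    (hf : ∀ t ∈ Set.Icc a b, HasDerivAt f (f' t) t)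
    (hmono : MonotoneOn f' (Set.Icc a b) ∨ AntitoneOn f' (Set.Icc a b))
    (M : ℝ) (hM : 0 < M) (hlow : ∀ t ∈ Set.Icc a b, M ≤ |f' t|) :
    ‖∫ t in a..b, Complex.exp (Complex.I * (f t : ℂ))‖ ≤ 4 / M := by
  have two_le_four : 2 / M ≤ 4 / M := by gcongr; norm_num
  rcases le_deriv_or_deriv_le_neg hf hM hlow with hpos | hneg
  · exact (norm_integral_exp_I_mul_le_of_le_deriv hab hf hmono hM hpos).trans two_le_four
  · rw [← norm_integral_exp_I_mul_neg]
    exact (norm_integral_exp_I_mul_le_of_le_deriv hab (f' := -f') (fun t ht => (hf t ht).neg)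
      (hmono.symm.imp AntitoneOn.neg MonotoneOn.neg) hM
      fun t ht => le_neg_of_le_neg (hneg t ht)).trans two_le_four
end

section
/- Suppose a sequence (q_n) of positive reals satisfies q_n > q_{n-1} and log₂ q_n < c₁ + log₂ m + log₂ q_{n-1} + log₃ q_{n-1} for all n > h, where m ≥ 3, c₁ > 0, and q_h ≥ e^{πm} ≥ e^π. Then for all n > h, log₂ q_n / log₃ q_n < n + (c₁ + log₂ m) ∑_{j=h+1}^n 1/log₃ q_j + log₂ q_h / log₃ q_{h+1}. -/
open Real

/-- Iterating the recursive inequality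
`log₂ qₙ < c₁ + log₂ m + log₂ qₙ₋₁ + log₃ qₙ₋₁` for an increasing sequence `(qₙ)`
with `q_h ≥ e^{πm}` gives, for all `n > h`,
`log₂ qₙ / log₃ qₙ < n + (c₁ + log₂ m) ∑_{j=h+1}^n 1/log₃ q_j + log₂ q_h / log₃ q_{h+1}`. -/
theorem iterated_log_recursion (q : ℕ → ℝ) (hpos : ∀ n, 0 < q n)
    (m : ℕ) (hm : 3 ≤ m) (c₁ : ℝ) (hc₁ : 0 < c₁) (h : ℕ)
    (hqh : Real.exp (π * m) ≤ q h)
    (hmono : ∀ n, h < n → q (n - 1) < q n)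
    (hrec : ∀ n, h < n →
      Real.log (Real.log (q n)) <
        c₁ + Real.log (Real.log (m : ℝ)) + Real.log (Real.log (q (n - 1))) +
          Real.log (Real.log (Real.log (q (n - 1))))) :
    ∀ n, h < n →
      Real.log (Real.log (q n)) / Real.log (Real.log (Real.log (q n))) <
        (n : ℝ) + (c₁ + Real.log (Real.log (m : ℝ))) *
            (∑ j ∈ Finset.Icc (h + 1) n, 1 / Real.log (Real.log (Real.log (q j)))) +
          Real.log (Real.log (q h)) / Real.log (Real.log (Real.log (q (h + 1)))) := by
  have hexp1 := Real.exp_one_lt_d9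
  have hm3 : (3:ℝ) ≤ (m:ℝ) := by exact_mod_cast hm
  set C : ℝ := c₁ + Real.log (Real.log (m : ℝ)) with hCdef
  have hC : 0 < C := by
    have h1 : (1:ℝ) < Real.log m := by
      rw [show (1:ℝ) = Real.log (Real.exp 1) by rw [Real.log_exp]]
      exact Real.log_lt_log (Real.exp_pos 1) (by nlinarith)
    have := Real.log_pos h1
    simp only [hCdef]; linarith
  clear_value C
  have hqmono : ∀ a b, h ≤ a → a ≤ b → q a ≤ q b := by
    intro a b ha hab
    induction b, hab using Nat.le_induction with
    | base => exact le_refl _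
    | succ k hk ih =>
      refine ih.trans (le_of_lt ?_)
      have := hmono (k + 1) (by omega)
      simpa using this
  have key : ∀ n, h ≤ n → 9 < Real.log (q n) ∧ 2 < Real.log (Real.log (q n)) ∧
      0 < Real.log (Real.log (Real.log (q n))) := by
    intro n hn
    have hq : Real.exp (π * m) ≤ q n := hqh.trans (hqmono h n le_rfl hn)
    have hlq : π * (m:ℝ) ≤ Real.log (q n) := (Real.le_log_iff_exp_le (hpos n)).2 hq
    have hpi := Real.pi_gt_three
    have h9 : (9:ℝ) < Real.log (q n) := by nlinarith
    have h2 : 2 < Real.log (Real.log (q n)) := by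
      rw [show (2:ℝ) = Real.log (Real.exp 2) by rw [Real.log_exp]]
      refine Real.log_lt_log (Real.exp_pos 2) ?_
      have he2 : Real.exp 2 = Real.exp 1 * Real.exp 1 := by
        rw [← Real.exp_add]; norm_num
      nlinarith [Real.exp_pos 1]
    exact ⟨h9, h2, Real.log_pos (by linarith)⟩
  have hL3mono : ∀ a b, h ≤ a → a ≤ b →
      Real.log (Real.log (Real.log (q a))) ≤ Real.log (Real.log (Real.log (q b))) := by
    intro a b ha hab
    obtain ⟨h9a, h2a, _⟩ := key a ha
    have h1 : Real.log (q a) ≤ Real.log (q b) :=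
      Real.log_le_log (hpos a) (hqmono a b ha hab)
    have h2 : Real.log (Real.log (q a)) ≤ Real.log (Real.log (q b)) :=
      Real.log_le_log (by linarith) h1
    exact Real.log_le_log (by linarith) h2
  have hsum : ∀ n, 0 ≤ ∑ j ∈ Finset.Icc (h + 1) n,
      1 / Real.log (Real.log (Real.log (q j))) := by
    intro n
    refine Finset.sum_nonneg fun j hj => ?_
    have hj' : h ≤ j := by
      simp only [Finset.mem_Icc] at hj; omega
    have := (key j hj').2.2
    positivity
  have hKpos : 0 < Real.log (Real.log (q h)) /
      Real.log (Real.log (Real.log (q (h + 1)))) :=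
    div_pos (by linarith [(key h le_rfl).2.1]) (key (h + 1) (by omega)).2.2
  intro n hn
  induction n, hn using Nat.le_induction with
  | base =>
    obtain ⟨_, h2h, h3h⟩ := key h le_rfl
    obtain ⟨_, h2s, h3s⟩ := key (h + 1) (by omega)
    have hmle := hL3mono h (h + 1) le_rfl (by omega)
    have hr := hrec (h + 1) (by omega)
    simp only [Nat.add_sub_cancel] at hr
    rw [Finset.Icc_self, Finset.sum_singleton]
    rw [div_lt_iff₀ h3s]
    have hinv : (1 / Real.log (Real.log (Real.log (q (h + 1))))) *
        Real.log (Real.log (Real.log (q (h + 1)))) = 1 := by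
      field_simp
    have hKx : Real.log (Real.log (q h)) / Real.log (Real.log (Real.log (q (h + 1)))) *
        Real.log (Real.log (Real.log (q (h + 1)))) = Real.log (Real.log (q h)) := by
      field_simp
    push_cast
    have hh0 : (0:ℝ) ≤ (h:ℝ) := Nat.cast_nonneg h
    nlinarith [mul_nonneg hh0 h3s.le]
  | succ k hk ih =>
    obtain ⟨_, h2k, h3k⟩ := key k (by omega)
    obtain ⟨_, h2s, h3s⟩ := key (k + 1) (by omega)
    have hmle := hL3mono k (k + 1) (by omega) (by omega)
    have hr := hrec (k + 1) (by omega)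
    simp only [Nat.add_sub_cancel] at hr
    have ih' := ih
    rw [div_lt_iff₀ h3k] at ih'
    rw [Finset.sum_Icc_succ_top (by omega : h + 1 ≤ k + 1)]
    rw [div_lt_iff₀ h3s]
    set x := Real.log (Real.log (Real.log (q (k + 1)))) with hxdef
    set S := ∑ j ∈ Finset.Icc (h + 1) k, 1 / Real.log (Real.log (Real.log (q j))) with hSdef
    set K := Real.log (Real.log (q h)) / Real.log (Real.log (Real.log (q (h + 1)))) with hKdef
    clear_value x S K
    have hinv : (1 / x) * x = 1 := by field_simp
    have hcoef : 0 ≤ (k:ℝ) + C * S + K := by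
      have := hsum k
      have hh0 : (0:ℝ) ≤ (k:ℝ) := Nat.cast_nonneg k
      nlinarith
    have hmul : ((k:ℝ) + C * S + K) * Real.log (Real.log (Real.log (q k))) ≤
        ((k:ℝ) + C * S + K) * x := mul_le_mul_of_nonneg_left hmle hcoef
    have hCx : C * (1 / x) * x = C := by field_simp
    push_cast
    nlinarith
end
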